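/- Fisher information dissipation identity (static form of Lemma 3.1): let f : ℝ^d → ℝ be smooth with compact support, set p := π·e^f, b := ∇ log π − γ, and σ := −∇·(p b) + Δp (the right-hand side of the Fokker–Planck equation evaluated at p). Then ∫_{ℝ^d} ( 2⟨∇f(x), ∇(σ/p)(x)⟩ p(x) + ‖∇f(x)‖² σ(x) ) dx = −2 ∫_{ℝ^d} ( Γ₂(f,f)(x) + Γ_I(f,f)(x) ) p(x) dx; the left-hand side is the time derivative of the relative Fisher information ∫‖∇ log(p_t/π)‖² p_t dx along the Fokker–Planck equation ∂_t p = −∇·(p b) + Δp, evaluated at p. -/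

import Mathlib

open MeasureTheory
open scoped BigOperators

noncomputable section

/-- `i`-th partial derivative of `f` at `x`, in the coordinate direction `i`. -/
def pderiv' {d : ℕ} (f : EuclideanSpace ℝ (Fin d) → ℝ) (i : Fin d)
    (x : EuclideanSpace ℝ (Fin d)) : ℝ :=
  fderiv ℝ f x (EuclideanSpace.single i 1)

/-- second partial derivative `∂_i ∂_j f` at `x`. -/
def pderiv2 {d : ℕ} (f : EuclideanSpace ℝ (Fin d) → ℝ) (i j : Fin d)
    (x : EuclideanSpace ℝ (Fin d)) : ℝ :=
  pderiv' (fun y => pderiv' f j y) i x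

/-- Laplacian `Δf`. -/
def lap {d : ℕ} (f : EuclideanSpace ℝ (Fin d) → ℝ) (x : EuclideanSpace ℝ (Fin d)) : ℝ :=
  ∑ i, pderiv2 f i i x

/-- carré du champ `Γ₁(g,h) = ⟨∇g, ∇h⟩`. -/
def Gamma1 {d : ℕ} (g h : EuclideanSpace ℝ (Fin d) → ℝ) (x : EuclideanSpace ℝ (Fin d)) : ℝ :=
  ∑ i, pderiv' g i x * pderiv' h i x

/-- generator `L̃ h = ⟨∇ log π, ∇h⟩ + Δh`. -/
def genL {d : ℕ} (π h : EuclideanSpace ℝ (Fin d) → ℝ) (x : EuclideanSpace ℝ (Fin d)) : ℝ :=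
  Gamma1 (fun y => Real.log (π y)) h x + lap h x

/-- Gamma two operator `Γ₂(f,f) = ½ L̃ Γ₁(f,f) − Γ₁(L̃f, f)`. -/
def Gamma2 {d : ℕ} (π f : EuclideanSpace ℝ (Fin d) → ℝ) (x : EuclideanSpace ℝ (Fin d)) : ℝ :=
  (1/2 : ℝ) * genL π (fun y => Gamma1 f f y) x - Gamma1 (fun y => genL π f y) f x

/-- information Gamma operator `Γ_I(f,f) = −½⟨γ, ∇Γ₁(f,f)⟩ + (L̃f)·⟨∇f, γ⟩`. -/
def GammaI {d : ℕ} (π : EuclideanSpace ℝ (Fin d) → ℝ)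
    (γ : EuclideanSpace ℝ (Fin d) → EuclideanSpace ℝ (Fin d))
    (f : EuclideanSpace ℝ (Fin d) → ℝ) (x : EuclideanSpace ℝ (Fin d)) : ℝ :=
  -(1/2 : ℝ) * (∑ i, γ x i * pderiv' (fun y => Gamma1 f f y) i x)
    + genL π f x * (∑ i, pderiv' f i x * γ x i)

/-- the tensor `ℜ` of the paper:
`ℜ_{ij} = −∂²_{ij} log π + ((3−2d)/8) γ_i γ_j − (1/8) δ_{ij} Σ_k γ_k²
          + ½(γ_i ∂_j log π + γ_j ∂_i log π)`. -/
def Rtensor {d : ℕ} (π : EuclideanSpace ℝ (Fin d) → ℝ)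
    (γ : EuclideanSpace ℝ (Fin d) → EuclideanSpace ℝ (Fin d))
    (i j : Fin d) (x : EuclideanSpace ℝ (Fin d)) : ℝ :=
  -pderiv2 (fun y => Real.log (π y)) i j x
    + ((3 - 2 * (d : ℝ)) / 8) * γ x i * γ x j
    - (1/8 : ℝ) * (if i = j then ∑ k, (γ x k) ^ 2 else 0)
    + (1/2 : ℝ) * (γ x i * pderiv' (fun y => Real.log (π y)) j x
        + γ x j * pderiv' (fun y => Real.log (π y)) i x)

/-- the modified Hessian matrix `𝔥ess f`. -/
def hessM {d : ℕ} (γ : EuclideanSpace ℝ (Fin d) → EuclideanSpace ℝ (Fin d))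
    (f : EuclideanSpace ℝ (Fin d) → ℝ) (i j : Fin d) (x : EuclideanSpace ℝ (Fin d)) : ℝ :=
  if i = j then
    pderiv2 f i i x + (1/2 : ℝ) * (∑ k, γ x k * pderiv' f k x)
      - (1/2 : ℝ) * γ x i * pderiv' f i x
  else
    pderiv2 f i j x - (1/4 : ℝ) * (γ x i * pderiv' f j x + γ x j * pderiv' f i x)

/-- right-hand side of the Fokker–Planck equation `−∇·(p b) + Δp` with drift
`b = ∇ log π − γ`, evaluated at a density `p`. -/
def FPrhs {d : ℕ} (π : EuclideanSpace ℝ (Fin d) → ℝ)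
    (γ : EuclideanSpace ℝ (Fin d) → EuclideanSpace ℝ (Fin d))
    (p : EuclideanSpace ℝ (Fin d) → ℝ) (x : EuclideanSpace ℝ (Fin d)) : ℝ :=
  -(∑ i, pderiv' (fun y => p y * (pderiv' (fun z => Real.log (π z)) i y - γ y i)) i x)
    + lap p x

/-- `L̃* p = −∇·(p ∇ log π) + Δp`. -/
def Ltilstar {d : ℕ} (π p : EuclideanSpace ℝ (Fin d) → ℝ)
    (x : EuclideanSpace ℝ (Fin d)) : ℝ :=
  -(∑ i, pderiv' (fun y => p y * pderiv' (fun z => Real.log (π z)) i y) i x) + lap p x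

/-- Arnold–Carlen tensor `(ℜ_AC)_{ij} = −∂²_{ij} log π − ½(∂_i γ_j + ∂_j γ_i)`. -/
def RAC {d : ℕ} (π : EuclideanSpace ℝ (Fin d) → ℝ)
    (γ : EuclideanSpace ℝ (Fin d) → EuclideanSpace ℝ (Fin d))
    (i j : Fin d) (x : EuclideanSpace ℝ (Fin d)) : ℝ :=
  -pderiv2 (fun y => Real.log (π y)) i j x
    - (1/2 : ℝ) * (pderiv' (fun y => γ y j) i x + pderiv' (fun y => γ y i) j x)


/-!
Write `p = π e^f`. Since `∇p = p ∇(log π + f)` and `∇·(πγ) = 0`, the Fokker–Planck right-hand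
side is `σ = p u` with `u = L̃f + Γ₁(f,f) + ⟨∇f, γ⟩`. A direct computation then shows that the
integrand `2 Γ₁(f,u) p + Γ₁(f,f) p u` differs from `−2 (Γ₂ + Γ_I)(f,f) p` by the divergence of
`p (∇Γ₁(f,f) + (Γ₁(f,f) + 2⟨∇f, γ⟩) ∇f − Γ₁(f,f) γ)`, a compactly supported field, whose
integral vanishes.
-/

section PartialDerivatives

variable {d : ℕ} {f g : EuclideanSpace ℝ (Fin d) → ℝ} {x : EuclideanSpace ℝ (Fin d)}

theorem pderiv'_add (hf : DifferentiableAt ℝ f x) (hg : DifferentiableAt ℝ g x) (i : Fin d) :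
    pderiv' (fun y => f y + g y) i x = pderiv' f i x + pderiv' g i x := by
  simp [pderiv', fderiv_fun_add hf hg]

theorem pderiv'_sub (hf : DifferentiableAt ℝ f x) (hg : DifferentiableAt ℝ g x) (i : Fin d) :
    pderiv' (fun y => f y - g y) i x = pderiv' f i x - pderiv' g i x := by
  simp [pderiv', fderiv_fun_sub hf hg]

theorem pderiv'_mul (hf : DifferentiableAt ℝ f x) (hg : DifferentiableAt ℝ g x) (i : Fin d) :
    pderiv' (fun y => f y * g y) i x = pderiv' f i x * g x + f x * pderiv' g i x := by
  simp [pderiv', fderiv_fun_mul hf hg]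
  ring

theorem pderiv'_const_mul (hf : DifferentiableAt ℝ f x) (c : ℝ) (i : Fin d) :
    pderiv' (fun y => c * f y) i x = c * pderiv' f i x := by
  simp [pderiv', fderiv_const_mul hf c]

theorem pderiv'_exp (hf : DifferentiableAt ℝ f x) (i : Fin d) :
    pderiv' (fun y => Real.exp (f y)) i x = Real.exp (f x) * pderiv' f i x := by
  simp [pderiv', fderiv_exp hf]

theorem pderiv'_eq_mul_pderiv'_log (hf : DifferentiableAt ℝ f x) (hfx : f x ≠ 0) (i : Fin d) :
    pderiv' f i x = f x * pderiv' (fun y => Real.log (f y)) i x := by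
  simp [pderiv', fderiv.log hf hfx, hfx]

theorem sum_pderiv'_mul {V : Fin d → EuclideanSpace ℝ (Fin d) → ℝ}
    (hf : DifferentiableAt ℝ f x) (hV : ∀ i, DifferentiableAt ℝ (V i) x) :
    ∑ i, pderiv' (fun y => f y * V i y) i x
      = f x * ∑ i, pderiv' (V i) i x + ∑ i, pderiv' f i x * V i x := by
  simp only [pderiv'_mul hf (hV _), Finset.mul_sum, ← Finset.sum_add_distrib]
  exact Finset.sum_congr rfl fun i _ => by ring

theorem ContDiff.pderiv' {n : WithTop ℕ∞} (hf : ContDiff ℝ (n + 1) f) (i : Fin d) :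
    ContDiff ℝ n (pderiv' f i) :=
  (hf.fderiv_right le_rfl).clm_apply contDiff_const

theorem ContDiff.differentiable_pderiv' (hf : ContDiff ℝ 2 f) (i : Fin d) :
    Differentiable ℝ (_root_.pderiv' f i) :=
  (hf.pderiv' (n := 1) i).differentiable one_ne_zero

theorem HasCompactSupport.pderiv' (hf : HasCompactSupport f) (i : Fin d) :
    HasCompactSupport (pderiv' f i) :=
  hf.fderiv (𝕜 := ℝ) |>.comp_left
    (g := fun L : EuclideanSpace ℝ (Fin d) →L[ℝ] ℝ => L (EuclideanSpace.single i 1)) rfl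

theorem integral_pderiv'_eq_zero (hf : ContDiff ℝ 1 f) (hfc : HasCompactSupport f) (i : Fin d) :
    ∫ x, pderiv' f i x = 0 := by
  have hint : Integrable fun x => fderiv ℝ f x (EuclideanSpace.single i 1) :=
    (hf.pderiv' (n := 0) i).continuous.integrable_of_hasCompactSupport (hfc.pderiv' i)
  simpa [pderiv'] using integral_mul_fderiv_eq_neg_fderiv_mul_of_integrable
    (μ := volume) (f := fun _ => (1 : ℝ)) (g := f) (v := EuclideanSpace.single i 1)
    (by simp) (by simpa using hint)
    (by simpa using hf.continuous.integrable_of_hasCompactSupport hfc)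
    (fun x _ => differentiableAt_const _) (fun x _ => hf.differentiable one_ne_zero x)

end PartialDerivatives

-- Holds without integrability of `f`: both sides are then `0`.
theorem MeasureTheory.integral_add_eq_left {α E : Type*} [MeasurableSpace α] {μ : Measure α}
    [NormedAddCommGroup E] [NormedSpace ℝ E] {f g : α → E} (hg : Integrable g μ)
    (hg0 : ∫ x, g x ∂μ = 0) : ∫ x, (f x + g x) ∂μ = ∫ x, f x ∂μ := by
  by_cases hf : Integrable f μ
  · rw [integral_add hf hg, hg0, add_zero]
  · rw [integral_undef hf, integral_undef fun h => hf (by simpa [Pi.sub_def] using h.sub hg)]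

theorem integral_add_sum_pderiv' {d : ℕ} {V : Fin d → EuclideanSpace ℝ (Fin d) → ℝ}
    (hV : ∀ i, ContDiff ℝ 1 (V i)) (hVc : ∀ i, HasCompactSupport (V i))
    (g : EuclideanSpace ℝ (Fin d) → ℝ) :
    ∫ x, (g x + ∑ i, pderiv' (V i) i x) = ∫ x, g x := by
  have hint : ∀ i, Integrable (pderiv' (V i) i) := fun i =>
    ((hV i).pderiv' (n := 0) i).continuous.integrable_of_hasCompactSupport ((hVc i).pderiv' i)
  refine integral_add_eq_left (integrable_finsetSum _ fun i _ => hint i) ?_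
  rw [integral_finsetSum _ fun i _ => hint i]
  exact Finset.sum_eq_zero fun i _ => integral_pderiv'_eq_zero (hV i) (hVc i) i

section Gamma

variable {d : ℕ} {g h k : EuclideanSpace ℝ (Fin d) → ℝ} {x : EuclideanSpace ℝ (Fin d)}

theorem Gamma1_comm (g h : EuclideanSpace ℝ (Fin d) → ℝ) (x : EuclideanSpace ℝ (Fin d)) :
    Gamma1 g h x = Gamma1 h g x := by
  simp only [Gamma1, mul_comm]

theorem Gamma1_add_right (hg : DifferentiableAt ℝ g x) (hh : DifferentiableAt ℝ h x) :
    Gamma1 k (fun y => g y + h y) x = Gamma1 k g x + Gamma1 k h x := by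
  simp only [Gamma1, pderiv'_add hg hh, mul_add, Finset.sum_add_distrib]

theorem Gamma1_add_const_mul_left (hg : DifferentiableAt ℝ g x) (hh : DifferentiableAt ℝ h x)
    (c : ℝ) : Gamma1 (fun y => g y + c * h y) k x = Gamma1 g k x + c * Gamma1 h k x := by
  simp only [Gamma1, pderiv'_add hg (hh.const_mul c), pderiv'_const_mul hh, Finset.mul_sum,
    ← Finset.sum_add_distrib]
  exact Finset.sum_congr rfl fun i _ => by ring

theorem ContDiff.Gamma1 {n : WithTop ℕ∞} (hg : ContDiff ℝ (n + 1) g)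
    (hh : ContDiff ℝ (n + 1) h) : ContDiff ℝ n (Gamma1 g h) :=
  ContDiff.sum fun i _ => (hg.pderiv' i).mul (hh.pderiv' i)

theorem ContDiff.lap {n : WithTop ℕ∞} (hg : ContDiff ℝ (n + 1 + 1) g) : ContDiff ℝ n (lap g) :=
  ContDiff.sum fun i _ => (hg.pderiv' i).pderiv' i

theorem HasCompactSupport.Gamma1_left (hg : HasCompactSupport g)
    (h : EuclideanSpace ℝ (Fin d) → ℝ) : HasCompactSupport (Gamma1 g h) := by
  have := HasCompactSupport.finset_sum (s := Finset.univ) fun i _ =>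
    (hg.pderiv' i).mul_right (f' := _root_.pderiv' h i)
  rw [Finset.sum_fn] at this
  exact this

end Gamma

section FokkerPlanck

variable {d : ℕ} {π f : EuclideanSpace ℝ (Fin d) → ℝ}
  {γ : EuclideanSpace ℝ (Fin d) → EuclideanSpace ℝ (Fin d)} {x : EuclideanSpace ℝ (Fin d)}

theorem pderiv'_mul_exp (hπ : DifferentiableAt ℝ π x) (hπx : π x ≠ 0)
    (hf : DifferentiableAt ℝ f x) (i : Fin d) :
    pderiv' (fun y => π y * Real.exp (f y)) i x
      = π x * Real.exp (f x) * (pderiv' (fun y => Real.log (π y)) i x + pderiv' f i x) := by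
  rw [pderiv'_mul hπ hf.exp, pderiv'_exp hf, pderiv'_eq_mul_pderiv'_log hπ hπx]
  ring

theorem sum_pderiv'_mul_exp_mul {V : Fin d → EuclideanSpace ℝ (Fin d) → ℝ}
    (hπ : DifferentiableAt ℝ π x) (hπx : π x ≠ 0) (hf : DifferentiableAt ℝ f x)
    (hV : ∀ i, DifferentiableAt ℝ (V i) x) :
    ∑ i, pderiv' (fun y => π y * Real.exp (f y) * V i y) i x
      = π x * Real.exp (f x) * (∑ i, pderiv' (V i) i x
          + ∑ i, (pderiv' (fun y => Real.log (π y)) i x + pderiv' f i x) * V i x) := by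
  rw [sum_pderiv'_mul (hπ.fun_mul hf.exp) hV, mul_add]
  congr 1
  rw [Finset.mul_sum]
  exact Finset.sum_congr rfl fun i _ => by rw [pderiv'_mul_exp hπ hπx hf]; ring

theorem sum_pderiv'_add_log_mul_eq_zero (hπ : DifferentiableAt ℝ π x) (hπx : π x ≠ 0)
    (hγ : DifferentiableAt ℝ γ x) (hstat : ∑ i, pderiv' (fun y => π y * γ y i) i x = 0) :
    ∑ i, pderiv' (fun y => γ y i) i x
      + ∑ i, pderiv' (fun y => Real.log (π y)) i x * γ x i = 0 := by
  rw [sum_pderiv'_mul hπ ((differentiableAt_piLp 2).1 hγ)] at hstat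
  simp only [pderiv'_eq_mul_pderiv'_log hπ hπx, mul_assoc, ← Finset.mul_sum, ← mul_add] at hstat
  exact (mul_eq_zero.1 hstat).resolve_left hπx

theorem sum_pderiv'_mul_exp_mul_pderiv' {H : EuclideanSpace ℝ (Fin d) → ℝ}
    (hπ : DifferentiableAt ℝ π x) (hπx : π x ≠ 0) (hf : DifferentiableAt ℝ f x)
    (hH : ∀ i, DifferentiableAt ℝ (pderiv' H i) x) :
    ∑ i, pderiv' (fun y => π y * Real.exp (f y) * pderiv' H i y) i x
      = π x * Real.exp (f x) * (genL π H x + Gamma1 f H x) := by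
  rw [sum_pderiv'_mul_exp_mul hπ hπx hf hH]
  simp only [genL, Gamma1, lap, pderiv2, add_mul, Finset.sum_add_distrib]
  ring

theorem sum_pderiv'_mul_exp_mul_apply (hπ : DifferentiableAt ℝ π x) (hπx : π x ≠ 0)
    (hf : DifferentiableAt ℝ f x) (hγ : DifferentiableAt ℝ γ x)
    (hstat : ∑ i, pderiv' (fun y => π y * γ y i) i x = 0) :
    ∑ i, pderiv' (fun y => π y * Real.exp (f y) * γ y i) i x
      = π x * Real.exp (f x) * ∑ i, pderiv' f i x * γ x i := by
  rw [sum_pderiv'_mul_exp_mul hπ hπx hf ((differentiableAt_piLp 2).1 hγ)]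
  simp only [add_mul, Finset.sum_add_distrib]
  linear_combination π x * Real.exp (f x) * sum_pderiv'_add_log_mul_eq_zero hπ hπx hγ hstat

theorem sum_pderiv'_mul_mul_exp_mul_pderiv' {K H : EuclideanSpace ℝ (Fin d) → ℝ}
    (hπ : DifferentiableAt ℝ π x) (hπx : π x ≠ 0) (hf : DifferentiableAt ℝ f x)
    (hK : DifferentiableAt ℝ K x) (hH : ∀ i, DifferentiableAt ℝ (pderiv' H i) x) :
    ∑ i, pderiv' (fun y => K y * (π y * Real.exp (f y) * pderiv' H i y)) i x
      = π x * Real.exp (f x) * (K x * (genL π H x + Gamma1 f H x) + Gamma1 K H x) := by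
  have hΓ : ∑ i, pderiv' K i x * (π x * Real.exp (f x) * pderiv' H i x)
      = π x * Real.exp (f x) * Gamma1 K H x := by
    rw [Gamma1, Finset.mul_sum]
    exact Finset.sum_congr rfl fun i _ => by ring
  rw [sum_pderiv'_mul hK fun i => (hπ.fun_mul hf.exp).fun_mul (hH i),
    sum_pderiv'_mul_exp_mul_pderiv' hπ hπx hf hH, hΓ]
  ring

theorem sum_pderiv'_mul_mul_exp_mul_apply {K : EuclideanSpace ℝ (Fin d) → ℝ}
    (hπ : DifferentiableAt ℝ π x) (hπx : π x ≠ 0) (hf : DifferentiableAt ℝ f x)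
    (hγ : DifferentiableAt ℝ γ x) (hstat : ∑ i, pderiv' (fun y => π y * γ y i) i x = 0)
    (hK : DifferentiableAt ℝ K x) :
    ∑ i, pderiv' (fun y => K y * (π y * Real.exp (f y) * γ y i)) i x
      = π x * Real.exp (f x)
          * (K x * ∑ i, pderiv' f i x * γ x i + ∑ i, γ x i * pderiv' K i x) := by
  have hΓ : ∑ i, pderiv' K i x * (π x * Real.exp (f x) * γ x i)
      = π x * Real.exp (f x) * ∑ i, γ x i * pderiv' K i x := by
    rw [Finset.mul_sum]
    exact Finset.sum_congr rfl fun i _ => by ring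
  rw [sum_pderiv'_mul hK fun i => (hπ.fun_mul hf.exp).fun_mul ((differentiableAt_piLp 2).1 hγ i),
    sum_pderiv'_mul_exp_mul_apply hπ hπx hf hγ hstat, hΓ]
  ring

/-- `σ / p` for `p = π e^f`, i.e. `∂ₜ f` along the Fokker–Planck flow. -/
def fokkerPlanckLogRate (π : EuclideanSpace ℝ (Fin d) → ℝ)
    (γ : EuclideanSpace ℝ (Fin d) → EuclideanSpace ℝ (Fin d))
    (f : EuclideanSpace ℝ (Fin d) → ℝ) (x : EuclideanSpace ℝ (Fin d)) : ℝ :=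
  genL π f x + Gamma1 f f x + ∑ i, pderiv' f i x * γ x i

theorem FPrhs_mul_exp (hπ : ContDiff ℝ 2 π) (hπpos : ∀ y, 0 < π y) (hf : ContDiff ℝ 2 f)
    (hγ : DifferentiableAt ℝ γ x) (hstat : ∑ i, pderiv' (fun y => π y * γ y i) i x = 0) :
    FPrhs π γ (fun y => π y * Real.exp (f y)) x
      = π x * Real.exp (f x) * fokkerPlanckLogRate π γ f x := by
  have hπd : Differentiable ℝ π := hπ.differentiable two_ne_zero
  have hfd : Differentiable ℝ f := hf.differentiable two_ne_zero
  have hpd : Differentiable ℝ fun y => π y * Real.exp (f y) := fun y => (hπd y).fun_mul (hfd y).exp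
  have hℓ : ContDiff ℝ 2 fun y => Real.log (π y) := hπ.log fun y => (hπpos y).ne'
  have hp : ∀ i, pderiv' (fun y => π y * Real.exp (f y)) i
      = fun y => π y * Real.exp (f y) * pderiv' (fun y => Real.log (π y)) i y
          + π y * Real.exp (f y) * pderiv' f i y := fun i => funext fun y => by
    rw [pderiv'_mul_exp (hπd y) (hπpos y).ne' (hfd y), mul_add]
  -- `Δp = ∇·(p ∇log π) + ∇·(p ∇f)`, and the first term cancels against the drift.
  have hterm : ∀ i,
      -pderiv' (fun y => π y * Real.exp (f y)
          * (pderiv' (fun z => Real.log (π z)) i y - γ y i)) i x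
        + pderiv2 (fun y => π y * Real.exp (f y)) i i x
      = pderiv' (fun y => π y * Real.exp (f y) * pderiv' f i y) i x
        + pderiv' (fun y => π y * Real.exp (f y) * γ y i) i x := by
    intro i
    have hℓi := (hpd x).fun_mul (hℓ.differentiable_pderiv' i x)
    simp only [pderiv2, hp, mul_sub]
    rw [pderiv'_sub hℓi ((hpd x).fun_mul ((differentiableAt_piLp 2).1 hγ i)),
      pderiv'_add hℓi ((hpd x).fun_mul (hf.differentiable_pderiv' i x))]
    ring
  simp only [FPrhs, lap, ← Finset.sum_neg_distrib, ← Finset.sum_add_distrib, hterm]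
  rw [Finset.sum_add_distrib,
    sum_pderiv'_mul_exp_mul_pderiv' (hπd x) (hπpos x).ne' (hfd x)
      fun i => hf.differentiable_pderiv' i x,
    sum_pderiv'_mul_exp_mul_apply (hπd x) (hπpos x).ne' (hfd x) hγ hstat, fokkerPlanckLogRate]
  ring

def fisherFlux (π : EuclideanSpace ℝ (Fin d) → ℝ)
    (γ : EuclideanSpace ℝ (Fin d) → EuclideanSpace ℝ (Fin d))
    (f : EuclideanSpace ℝ (Fin d) → ℝ) (i : Fin d) (y : EuclideanSpace ℝ (Fin d)) : ℝ :=
  π y * Real.exp (f y) * pderiv' (fun z => Gamma1 f f z) i y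
    + (Gamma1 f f y + 2 * ∑ j, pderiv' f j y * γ y j) * (π y * Real.exp (f y) * pderiv' f i y)
    - Gamma1 f f y * (π y * Real.exp (f y) * γ y i)

theorem dissipation_integrand_eq (hπ : ContDiff ℝ 2 π) (hπpos : ∀ y, 0 < π y)
    (hγ : ContDiff ℝ 1 γ) (hf : ContDiff ℝ 3 f)
    (hstat : ∑ i, pderiv' (fun y => π y * γ y i) i x = 0) :
    2 * Gamma1 f (fokkerPlanckLogRate π γ f) x * (π x * Real.exp (f x))
        + Gamma1 f f x * (π x * Real.exp (f x) * fokkerPlanckLogRate π γ f x)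
      = -2 * ((Gamma2 π f x + GammaI π γ f x) * (π x * Real.exp (f x)))
        + ∑ i, pderiv' (fisherFlux π γ f i) i x := by
  have hπx : π x ≠ 0 := (hπpos x).ne'
  have hπd : DifferentiableAt ℝ π x := hπ.differentiable two_ne_zero x
  have hfd : DifferentiableAt ℝ f x := hf.differentiable three_ne_zero x
  have hγd : DifferentiableAt ℝ γ x := hγ.differentiable one_ne_zero x
  have hpd : DifferentiableAt ℝ (fun y => π y * Real.exp (f y)) x := hπd.fun_mul hfd.exp
  have hf2 : ContDiff ℝ 2 f := hf.of_le (by norm_num)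
  have hG : ContDiff ℝ 2 fun y => Gamma1 f f y := ContDiff.Gamma1 (n := 2) hf hf
  have hGd : DifferentiableAt ℝ (fun y => Gamma1 f f y) x := hG.differentiable two_ne_zero x
  have hcd : DifferentiableAt ℝ (fun y => ∑ j, pderiv' f j y * γ y j) x :=
    DifferentiableAt.fun_sum fun j _ =>
      (hf2.differentiable_pderiv' j x).fun_mul ((differentiableAt_piLp 2).1 hγd j)
  have hLd : DifferentiableAt ℝ (fun y => genL π f y) x :=
    ((ContDiff.Gamma1 (n := 1) (hπ.log fun y => (hπpos y).ne') hf2).add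
      (ContDiff.lap (n := 1) hf)).differentiable one_ne_zero x
  have hdiv : ∑ i, pderiv' (fisherFlux π γ f i) i x
      = ∑ i, pderiv' (fun y => π y * Real.exp (f y) * pderiv' (fun z => Gamma1 f f z) i y) i x
        + ∑ i, pderiv' (fun y => (Gamma1 f f y + 2 * ∑ j, pderiv' f j y * γ y j)
            * (π y * Real.exp (f y) * pderiv' f i y)) i x
        - ∑ i, pderiv' (fun y => Gamma1 f f y * (π y * Real.exp (f y) * γ y i)) i x := by
    rw [← Finset.sum_add_distrib, ← Finset.sum_sub_distrib]
    refine Finset.sum_congr rfl fun i _ => ?_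
    have hA := hpd.fun_mul (hG.differentiable_pderiv' i x)
    have hB := (hGd.fun_add (hcd.const_mul 2)).fun_mul
      (hpd.fun_mul (hf2.differentiable_pderiv' i x))
    have hC := hGd.fun_mul (hpd.fun_mul ((differentiableAt_piLp 2).1 hγd i))
    show pderiv' (fun y => _ + _ - _) i x = _
    rw [pderiv'_sub (hA.fun_add hB) hC, pderiv'_add hA hB]
  have hu : Gamma1 f (fokkerPlanckLogRate π γ f) x
      = Gamma1 f (fun y => genL π f y) x + Gamma1 f (fun y => Gamma1 f f y) x
        + Gamma1 f (fun y => ∑ j, pderiv' f j y * γ y j) x := by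
    rw [show fokkerPlanckLogRate π γ f = fun y => genL π f y + Gamma1 f f y
        + ∑ j, pderiv' f j y * γ y j from rfl,
      Gamma1_add_right (hLd.fun_add hGd) hcd, Gamma1_add_right hLd hGd]
  rw [hdiv, sum_pderiv'_mul_exp_mul_pderiv' hπd hπx hfd fun i => hG.differentiable_pderiv' i x,
    sum_pderiv'_mul_mul_exp_mul_pderiv' hπd hπx hfd (hGd.fun_add (hcd.const_mul 2))
      fun i => hf2.differentiable_pderiv' i x,
    sum_pderiv'_mul_mul_exp_mul_apply hπd hπx hfd hγd hstat hGd,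
    Gamma1_add_const_mul_left hGd hcd, hu, Gamma1_comm f (fun y => genL π f y),
    Gamma1_comm f (fun y => Gamma1 f f y), Gamma1_comm f (fun y => ∑ j, pderiv' f j y * γ y j)]
  simp only [Gamma2, GammaI, fokkerPlanckLogRate]
  ring

theorem contDiff_fisherFlux (hπ : ContDiff ℝ 1 π) (hγ : ContDiff ℝ 1 γ) (hf : ContDiff ℝ 3 f)
    (i : Fin d) : ContDiff ℝ 1 (fisherFlux π γ f i) := by
  have hp : ContDiff ℝ 1 fun y => π y * Real.exp (f y) := hπ.mul (hf.of_le (by norm_num)).exp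
  have hG : ContDiff ℝ 2 fun y => Gamma1 f f y := ContDiff.Gamma1 (n := 2) hf hf
  have hγi := (contDiff_piLp 2).1 hγ
  have hfi : ∀ j, ContDiff ℝ 1 (pderiv' f j) := fun j =>
    (hf.pderiv' (n := 2) j).of_le (by norm_num)
  exact ((hp.mul (hG.pderiv' (n := 1) i)).add
      (((hG.of_le (by norm_num)).add (contDiff_const.mul (ContDiff.sum fun j _ =>
        (hfi j).mul (hγi j)))).mul (hp.mul (hfi i)))).sub
    ((hG.of_le (by norm_num)).mul (hp.mul (hγi i)))

theorem hasCompactSupport_fisherFlux (hf : HasCompactSupport f) (i : Fin d) :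
    HasCompactSupport (fisherFlux π γ f i) := by
  have hG : HasCompactSupport fun y => Gamma1 f f y := hf.Gamma1_left f
  exact ((hG.pderiv' i).mul_left.add ((hf.pderiv' i).mul_left.mul_left)).sub hG.mul_right

end FokkerPlanck

theorem fisher_information_dissipation_identity_general
    (d : ℕ)
    (π : EuclideanSpace ℝ (Fin d) → ℝ) (hπ : ContDiff ℝ (⊤ : ℕ∞) π)
    (hπpos : ∀ x, 0 < π x)
    (γ : EuclideanSpace ℝ (Fin d) → EuclideanSpace ℝ (Fin d))
    (hγ : ContDiff ℝ (⊤ : ℕ∞) γ)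
    (hstat : ∀ x, ∑ i, pderiv' (fun y => π y * γ y i) i x = 0)
    (f : EuclideanSpace ℝ (Fin d) → ℝ) (hf : ContDiff ℝ (⊤ : ℕ∞) f)
    (hfc : HasCompactSupport f) :
    ∫ x, (2 * Gamma1 f
            (fun y => FPrhs π γ (fun z => π z * Real.exp (f z)) y
              / (π y * Real.exp (f y))) x * (π x * Real.exp (f x))
          + Gamma1 f f x * FPrhs π γ (fun z => π z * Real.exp (f z)) x) =
      -2 * ∫ x, (Gamma2 π f x + GammaI π γ f x) * (π x * Real.exp (f x)) := by
  have hπ2 : ContDiff ℝ 2 π := contDiff_infty.1 hπ 2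
  have hγ1 : ContDiff ℝ 1 γ := contDiff_infty.1 hγ 1
  have hf3 : ContDiff ℝ 3 f := contDiff_infty.1 hf 3
  have hσ : ∀ y, FPrhs π γ (fun z => π z * Real.exp (f z)) y
      = π y * Real.exp (f y) * fokkerPlanckLogRate π γ f y := fun y =>
    FPrhs_mul_exp hπ2 hπpos (contDiff_infty.1 hf 2) (hγ1.differentiable one_ne_zero y) (hstat y)
  have hrate : (fun y => FPrhs π γ (fun z => π z * Real.exp (f z)) y / (π y * Real.exp (f y)))
      = fokkerPlanckLogRate π γ f :=
    funext fun y => by rw [hσ, mul_div_cancel_left₀ _ (mul_pos (hπpos y) (Real.exp_pos _)).ne']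
  rw [hrate, ← integral_const_mul]
  calc _ = ∫ x, (-2 * ((Gamma2 π f x + GammaI π γ f x) * (π x * Real.exp (f x)))
          + ∑ i, pderiv' (fisherFlux π γ f i) i x) :=
        integral_congr_ae (Filter.Eventually.of_forall fun x => by
          rw [hσ]; exact dissipation_integrand_eq hπ2 hπpos hγ1 hf3 (hstat x))
    _ = _ := integral_add_sum_pderiv' (contDiff_fisherFlux (contDiff_infty.1 hπ 1) hγ1 hf3)
        (hasCompactSupport_fisherFlux hfc) _

/-- Lemma 3.1 (static form): with `p = π e^f`, `b = ∇ log π − γ`, and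
`σ = −∇·(p b) + Δp`, the time derivative of the relative Fisher information along
the Fokker–Planck equation, namely `∫ (2⟨∇f, ∇(σ/p)⟩ p + ‖∇f‖² σ)`, equals
`−2 ∫ (Γ₂(f,f) + Γ_I(f,f)) p`. -/
theorem fisher_information_dissipation_identity
    (d : ℕ) (hd : 1 ≤ d)
    (π : EuclideanSpace ℝ (Fin d) → ℝ) (hπ : ContDiff ℝ (⊤ : ℕ∞) π)
    (hπpos : ∀ x, 0 < π x)
    (γ : EuclideanSpace ℝ (Fin d) → EuclideanSpace ℝ (Fin d))
    (hγ : ContDiff ℝ (⊤ : ℕ∞) γ)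
    (hstat : ∀ x, ∑ i, pderiv' (fun y => π y * γ y i) i x = 0)
    (f : EuclideanSpace ℝ (Fin d) → ℝ) (hf : ContDiff ℝ (⊤ : ℕ∞) f)
    (hfc : HasCompactSupport f) :
    ∫ x, (2 * Gamma1 f
            (fun y => FPrhs π γ (fun z => π z * Real.exp (f z)) y
              / (π y * Real.exp (f y))) x * (π x * Real.exp (f x))
          + Gamma1 f f x * FPrhs π γ (fun z => π z * Real.exp (f z)) x) =
      -2 * ∫ x, (Gamma2 π f x + GammaI π γ f x) * (π x * Real.exp (f x)) :=
  fisher_information_dissipation_identity_general d π hπ hπpos γ hγ hstat f hf hfc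

end
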